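/- There exists a constant C > 0 such that for all even integers n ≥ 4, | MSE(n, n/2) − 1/(4n) − 1/(2πn) | ≤ C/n². In particular, MSE(n, n/2) = 1/(4n) + 1/(2πn) + O(n^{−2}) as n → ∞ along even integers. -/

import Mathlib

/-!
For `n = 2m` the last binomial factor of `Cov` has upper index `0`, so only the term
`j = ⌊m/2⌋` survives and `Cov(2m, m) = 4^{-m} binom(m-1, ⌊m/2⌋)² = (binom(2t, t)/4^t)²/4`
with `t = ⌊m/2⌋`. The bounds `π/2 · (2t+1)/(2t+2) ≤ W t ≤ π/2` on the partial Wallis products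
place `(binom(2t, t)/4^t)²` in `[1/(π(t+1/2)), 1/(πt)]`, an interval of length `O(t⁻²)` that
also contains `1/(π n/4)`.
-/

open Real

/-- Binomial coefficient with an integer lower index, with the convention that it
vanishes for negative lower index (and, via `Nat.choose`, above the upper index). -/
def ibinom (a : ℕ) (b : ℤ) : ℕ := if 0 ≤ b then a.choose b.toNat else 0

/-- The fold covariance of k-fold cross-validation of the Majority algorithm on `n`
i.i.d. uniformly random binary labels with fold size `m = n/k`:
`Cov(n, m) = 2^{-n} · Σ_{j=0}^{m-1} binom(m-1, j)² · binom(n-2m, ⌊(n-m)/2⌋ - j)`. -/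
noncomputable def Cov (n m : ℕ) : ℝ :=
  (2 : ℝ)⁻¹ ^ n * ∑ j ∈ Finset.range m,
    ((m - 1).choose j : ℝ) ^ 2 * (ibinom (n - 2 * m) (((n : ℤ) - m) / 2 - j) : ℝ)

/-- The mean-squared error of the k-fold cross-validation risk estimator of Majority
under uniformly random labels, with fold size `m = n/k`:
`MSE(n, m) = (1 - m/n)·Cov(n, m) + 1/(4n)`. -/
noncomputable def MSE (n m : ℕ) : ℝ :=
  (1 - (m : ℝ) / n) * Cov n m + 1 / (4 * n)

open Set

lemma ibinom_zero (b : ℤ) : ibinom 0 b = if b = 0 then 1 else 0 := by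
  unfold ibinom
  split_ifs with hb hb0 hb0
  · simp [hb0]
  · exact Nat.choose_eq_zero_of_lt (by omega)
  · omega
  · rfl

lemma Cov_two_mul_self {m : ℕ} (hm : 0 < m) :
    Cov (2 * m) m = ((m - 1).choose (m / 2) : ℝ) ^ 2 / 4 ^ m := by
  have hindex (j : ℕ) : (((2 * m : ℕ) : ℤ) - m) / 2 - j = ((m / 2 : ℕ) : ℤ) - j := by
    push_cast; omega
  rw [Cov, Nat.sub_self, Finset.sum_eq_single (m / 2)]
  · rw [hindex, sub_self, ibinom_zero, if_pos rfl, pow_mul, div_eq_mul_inv, ← inv_pow]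
    norm_num
    ring
  · intro j _ hj
    rw [hindex, ibinom_zero, if_neg (by omega), Nat.cast_zero, mul_zero]
  · exact fun h => absurd (Finset.mem_range.2 (Nat.div_lt_self hm one_lt_two)) h

lemma Nat.centralBinom_succ_eq_two_mul_choose (u : ℕ) :
    (u + 1).centralBinom = 2 * (2 * u + 1).choose (u + 1) := by
  rw [Nat.centralBinom_eq_two_mul_choose, show 2 * (u + 1) = 2 * u + 1 + 1 by ring,
    Nat.choose_succ_succ', Nat.choose_symm_half]
  ring

lemma sq_choose_pred_half_div_four_pow {m : ℕ} (hm : 0 < m) :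
    ((m - 1).choose (m / 2) : ℝ) ^ 2 / 4 ^ m =
      ((m / 2).centralBinom / 4 ^ (m / 2) : ℝ) ^ 2 / 4 := by
  obtain ⟨t, rfl | rfl⟩ := Nat.even_or_odd' m
  · obtain ⟨u, rfl⟩ : ∃ u, t = u + 1 := ⟨t - 1, by omega⟩
    rw [Nat.mul_div_cancel_left _ two_pos, show 2 * (u + 1) - 1 = 2 * u + 1 by omega,
      Nat.centralBinom_succ_eq_two_mul_choose, pow_mul']
    push_cast
    ring
  · rw [show (2 * t + 1) / 2 = t by omega, Nat.add_sub_cancel,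
      ← Nat.centralBinom_eq_two_mul_choose, pow_succ (4 : ℝ), pow_mul']
    ring

lemma MSE_two_mul_self {m : ℕ} (hm : m ≠ 0) :
    MSE (2 * m) m = Cov (2 * m) m / 2 + 1 / (4 * (2 * m : ℕ)) := by
  rw [MSE]
  congr 1
  push_cast
  field_simp
  ring

lemma sq_centralBinom_div_four_pow_eq (t : ℕ) :
    (t.centralBinom / 4 ^ t : ℝ) ^ 2 = 1 / ((2 * t + 1) * Wallis.W t) := by
  have hfac : ((2 * t).factorial : ℝ) = t.centralBinom * t.factorial ^ 2 := by
    have := Nat.choose_mul_factorial_mul_factorial (Nat.le_mul_of_pos_left t two_pos)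
    rw [two_mul, Nat.add_sub_cancel, ← two_mul, ← Nat.centralBinom_eq_two_mul_choose] at this
    rw [sq, ← mul_assoc]
    exact_mod_cast this.symm
  have hpow : (2 : ℝ) ^ (4 * t) = (4 ^ t) ^ 2 := by
    rw [← pow_mul, show (4 : ℝ) = 2 ^ 2 by norm_num, ← pow_mul]
    ring_nf
  have := t.centralBinom_pos
  rw [Wallis.W_eq_factorial_ratio, hfac, hpow]
  field_simp

lemma sq_centralBinom_div_four_pow_mem_Icc {t : ℕ} (ht : 0 < t) :
    (t.centralBinom / 4 ^ t : ℝ) ^ 2 ∈ Icc (1 / (π * (t + 1 / 2))) (1 / (π * t)) := by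
  rw [sq_centralBinom_div_four_pow_eq]
  have hW := Wallis.W_pos t
  have hWle := Wallis.W_le t
  have hleW := Wallis.le_W t
  have ht' : (0 : ℝ) < t := by exact_mod_cast ht
  rw [div_mul_eq_mul_div, div_le_iff₀ (by positivity)] at hleW
  constructor
  · apply one_div_le_one_div_of_le (by positivity)
    nlinarith
  · apply one_div_le_one_div_of_le (by positivity)
    nlinarith [pi_pos]

lemma abs_sub_one_div_pi_mul_le {t s B : ℝ} (ht : 1 ≤ t) (hs : s ∈ Icc t (t + 1 / 2))
    (hB : B ∈ Icc (1 / (π * (t + 1 / 2))) (1 / (π * t))) :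
    |B - 1 / (π * s)| ≤ 1 / (2 * s ^ 2) := by
  have hs0 : 0 < s := by linarith [hs.1]
  have hwidth : 1 / (π * t) - 1 / (π * (t + 1 / 2)) = 1 / (2 * (π * t * (t + 1 / 2))) := by
    field_simp
    ring
  calc |B - 1 / (π * s)|
      ≤ 1 / (π * t) - 1 / (π * (t + 1 / 2)) :=
        abs_sub_le_of_le_of_le hB.1 hB.2
          (one_div_le_one_div_of_le (by positivity) (by nlinarith [pi_pos, hs.2]))
          (one_div_le_one_div_of_le (by positivity) (by nlinarith [pi_pos, hs.1]))
    _ ≤ 1 / (2 * s ^ 2) := by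
        rw [hwidth]
        gcongr
        calc s ^ 2 ≤ (t + 1 / 2) ^ 2 := pow_le_pow_left₀ hs0.le hs.2 2
          _ ≤ π * t * (t + 1 / 2) := by
            have : t + 1 / 2 ≤ π * t := by nlinarith [pi_gt_three]
            nlinarith

/-- **Asymptotics of the 2-fold MSE.**
`MSE(n, n/2) = 1/(4n) + 1/(2πn) + O(n^{-2})` along even integers. -/
theorem mse_twofold_asymptotics :
    ∃ C : ℝ, 0 < C ∧ ∀ n : ℕ, 4 ≤ n → Even n →
      |MSE n (n / 2) - 1 / (4 * n) - 1 / (2 * π * n)| ≤ C / (n : ℝ) ^ 2 := by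
  refine ⟨1, one_pos, fun n hn hev => ?_⟩
  obtain ⟨m, rfl⟩ := hev.two_dvd
  have hm : 0 < m := by omega
  have ht : 0 < m / 2 := by omega
  have hs : (m / 2 : ℝ) ∈ Icc ((m / 2 : ℕ) : ℝ) ((m / 2 : ℕ) + 1 / 2) := by
    have : (m : ℝ) ≤ 2 * (m / 2 : ℕ) + 1 := by exact_mod_cast (by omega : m ≤ 2 * (m / 2) + 1)
    exact ⟨Nat.cast_div_le, by linarith⟩
  have hwallis := abs_sub_one_div_pi_mul_le (by exact_mod_cast ht) hs
    (sq_centralBinom_div_four_pow_mem_Icc ht)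
  rw [Nat.mul_div_cancel_left m two_pos, MSE_two_mul_self hm.ne', Cov_two_mul_self hm,
    sq_choose_pred_half_div_four_pow hm]
  set B := ((m / 2).centralBinom / 4 ^ (m / 2) : ℝ) ^ 2
  calc _ = |(B - 1 / (π * (m / 2))) / 8| := by
        push_cast
        congr 1
        field_simp
        ring
    _ ≤ 1 / (2 * (m / 2) ^ 2) / 8 := by
        rw [abs_div, abs_of_pos (by norm_num : (0 : ℝ) < 8)]
        gcongr
    _ = 1 / ((2 * m : ℕ) : ℝ) ^ 2 := by
        push_cast
        field_simp
        ring
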